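/- arXiv:2410.18174 — 6 statements merged into one kernel-verified Lean document; each statement's English description precedes it below -/
import Mathlib

section
/- Let α ∈ (0,1] and x ≥ 1. The sequence z_k(x) defined by z₋₁ = 1, z₀ = x, and the conservation law α·z_{k+1} = (1−α)z_k − 1/z_k + α(x+1) satisfies z_k(x) ≥ x ≥ 1 for all k ≥ 0, and is monotonically nondecreasing in k: z_{k+1}(x) ≥ z_k(x). -/
/-- via the conservation law z_{k+1} = ((1−α)z_k − 1/z_k)/α + x + 1,
the sequence satisfies z_k(x) ≥ x ≥ 1 and is nondecreasing in k. -/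
theorem stmt4 (α x : ℝ) (hα : 0 < α) (hα1 : α ≤ 1) (hx : 1 ≤ x)
    (z : ℕ → ℝ) (hz0 : z 0 = x)
    (hrec : ∀ k, z (k+1) = (1/α) * ((1-α) * z k - 1/(z k)) + x + 1) :
    ∀ k, x ≤ z k ∧ z k ≤ z (k+1) := by
  have hx0 : (0:ℝ) < x := lt_of_lt_of_le one_pos hx
  have h2 : (0:ℝ) ≤ 1/α := le_of_lt (one_div_pos.mpr hα)
  intro k
  induction k with
  | zero =>
    refine ⟨le_of_eq hz0.symm, ?_⟩
    rw [hrec 0, hz0]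
    have hinv : 1/x ≤ 1 := by rw [div_le_one hx0]; exact hx
    have h1 : (0:ℝ) ≤ (1-α) * x - 1/x + α := by nlinarith
    have hkey : (1/α) * ((1-α) * x - 1/x) + 1 = (1/α) * ((1-α) * x - 1/x + α) := by
      field_simp
    have := mul_nonneg h2 h1
    linarith [hkey ▸ this]
  | succ k ih =>
    obtain ⟨hxk, hmono⟩ := ih
    have hk1 : x ≤ z (k+1) := le_trans hxk hmono
    refine ⟨hk1, ?_⟩
    have hzk0 : 0 < z k := lt_of_lt_of_le hx0 hxk
    have hinv : 1 / z (k+1) ≤ 1 / z k := one_div_le_one_div_of_le hzk0 hmono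
    have h1 : (1-α) * z k - 1/(z k) ≤ (1-α) * z (k+1) - 1/(z (k+1)) := by
      have := mul_le_mul_of_nonneg_left hmono (by linarith : (0:ℝ) ≤ 1-α)
      linarith
    have h3 := mul_le_mul_of_nonneg_left h1 h2
    rw [hrec (k+1)]
    linarith [hrec k, h3]
end

section
/- Let 1/2 < α < 1 and x > 1. The sequence z₀ = x, z_{k+1} = ((1−α)z_k − 1/z_k)/α + x + 1 converges, and its limit equals z_∞(x) = (α(x+1) + √(α²(x+1)² − 4(2α−1)))/(4α − 2). -/
/-!
Write f(t) = ((1-α)t - 1/t)/α + x + 1 and q(t) = (2α-1)t² - α(x+1)t + 1, so that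
f(t) - t = -q(t)/(αt). The map f is increasing on t > 0, and q(x) = -(x-1)((1-α)x+1) < 0,
so x lies below the larger root L of q, which is z_∞(x). Hence f maps [x, L] into itself and
x ≤ f(x): the iterates from x increase, stay in [x, L] and converge to a fixed point of f there,
that is, to a root of q that is at least x. Since q(x) < 0, the only such root is L.
-/

open Filter Topology Set Function

section MonotoneIteration

variable {X : Type*} [ConditionallyCompleteLinearOrder X] {f : X → X} {a b : X} {z : ℕ → X}

lemma mapsTo_Icc_of_monotoneOn (hf : MonotoneOn f (Icc a b)) (ha : a ≤ f a) (hb : f b ≤ b) :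
    MapsTo f (Icc a b) (Icc a b) := fun _ ht =>
  have hab : a ≤ b := ht.1.trans ht.2
  ⟨ha.trans (hf (left_mem_Icc.2 hab) ht ht.1), (hf ht (right_mem_Icc.2 hab) ht.2).trans hb⟩

lemma mem_Icc_and_le_succ_of_monotoneOn (hab : a ≤ b) (hf : MonotoneOn f (Icc a b))
    (ha : a ≤ f a) (hb : f b ≤ b) (hz0 : z 0 = a) (hrec : ∀ k, z (k + 1) = f (z k)) (k : ℕ) :
    z k ∈ Icc a b ∧ z k ≤ z (k + 1) := by
  induction k with
  | zero => rw [hrec, hz0]; exact ⟨left_mem_Icc.2 hab, ha⟩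
  | succ k ih =>
    have hmem : z (k + 1) ∈ Icc a b := by
      rw [hrec]; exact mapsTo_Icc_of_monotoneOn hf ha hb ih.1
    exact ⟨hmem, (hrec k).trans_le ((hf ih.1 hmem ih.2).trans_eq (hrec (k + 1)).symm)⟩

variable [TopologicalSpace X] [OrderTopology X]

lemma exists_isFixedPt_tendsto_of_monotoneOn_Icc (hab : a ≤ b) (hf : MonotoneOn f (Icc a b))
    (hcont : ContinuousOn f (Icc a b)) (ha : a ≤ f a) (hb : f b ≤ b) (hz0 : z 0 = a)
    (hrec : ∀ k, z (k + 1) = f (z k)) :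
    ∃ c ∈ Icc a b, IsFixedPt f c ∧ Tendsto z atTop (𝓝 c) := by
  have hz := mem_Icc_and_le_succ_of_monotoneOn hab hf ha hb hz0 hrec
  have hlim : Tendsto z atTop (𝓝 (⨆ k, z k)) :=
    tendsto_atTop_ciSup (monotone_nat_of_le_succ fun k => (hz k).2)
      ⟨b, by rintro _ ⟨k, rfl⟩; exact (hz k).1.2⟩
  have hmem : ⨆ k, z k ∈ Icc a b :=
    isClosed_Icc.mem_of_tendsto hlim (Eventually.of_forall fun k => (hz k).1)
  refine ⟨_, hmem, tendsto_nhds_unique ?_ (hlim.comp (tendsto_add_atTop_nat 1)), hlim⟩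
  simp only [comp_def, hrec]
  exact (hcont _ hmem).tendsto.comp
    (tendsto_nhdsWithin_iff.2 ⟨hlim, Eventually.of_forall fun k => (hz k).1⟩)

end MonotoneIteration

section LargerRoot

variable {a b c x : ℝ}

lemma quadratic_larger_root_eq_zero (ha : a ≠ 0) (hd : 0 ≤ discrim a b c) :
    a * ((-b + √(discrim a b c)) / (2 * a) * ((-b + √(discrim a b c)) / (2 * a)))
      + b * ((-b + √(discrim a b c)) / (2 * a)) + c = 0 :=
  (quadratic_eq_zero_iff ha (Real.mul_self_sqrt hd).symm _).2 (Or.inl rfl)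

lemma discrim_eq_sq_sub_quadratic (a b c x : ℝ) :
    discrim a b c = (2 * a * x + b) ^ 2 - 4 * a * (a * (x * x) + b * x + c) := by
  unfold discrim; ring

lemma discrim_nonneg_of_quadratic_nonpos (ha : 0 ≤ a) (hx : a * (x * x) + b * x + c ≤ 0) :
    0 ≤ discrim a b c := by
  rw [discrim_eq_sq_sub_quadratic a b c x]
  nlinarith [sq_nonneg (2 * a * x + b)]

lemma le_larger_root (ha : 0 < a) (hx : a * (x * x) + b * x + c ≤ 0) :
    x ≤ (-b + √(discrim a b c)) / (2 * a) := by
  have hsq : (2 * a * x + b) ^ 2 ≤ discrim a b c := by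
    rw [discrim_eq_sq_sub_quadratic a b c x]; nlinarith
  rw [le_div_iff₀ (by positivity)]
  linarith [le_abs_self (2 * a * x + b), Real.abs_le_sqrt hsq]

lemma eq_larger_root_of_quadratic_eq_zero {y : ℝ} (ha : 0 < a)
    (hx : a * (x * x) + b * x + c < 0) (hxy : x ≤ y) (hy : a * (y * y) + b * y + c = 0) :
    y = (-b + √(discrim a b c)) / (2 * a) := by
  have hpos : 0 < 2 * a * y + b := by
    by_contra! h
    nlinarith [mul_nonpos_of_nonneg_of_nonpos (sub_nonneg.2 hxy) h,
      mul_nonneg ha.le (sq_nonneg (y - x))]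
  rw [discrim_eq_sq_of_quadratic_eq_zero hy, Real.sqrt_sq hpos.le]
  field_simp
  ring

end LargerRoot

section ZMap

variable {α x t : ℝ}

noncomputable def zMap (α x t : ℝ) : ℝ := ((1 - α) * t - 1 / t) / α + x + 1

lemma zMap_sub_self (hα : α ≠ 0) (ht : t ≠ 0) :
    zMap α x t - t = -((2 * α - 1) * (t * t) + -(α * (x + 1)) * t + 1) / (α * t) := by
  unfold zMap
  field_simp
  ring

lemma le_zMap (hα : 0 < α) (ht : 0 < t)
    (hq : (2 * α - 1) * (t * t) + -(α * (x + 1)) * t + 1 ≤ 0) : t ≤ zMap α x t := by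
  rw [← sub_nonneg, zMap_sub_self hα.ne' ht.ne']
  exact div_nonneg (neg_nonneg.2 hq) (by positivity)

lemma zMap_eq_self_iff (hα : α ≠ 0) (ht : t ≠ 0) :
    zMap α x t = t ↔ (2 * α - 1) * (t * t) + -(α * (x + 1)) * t + 1 = 0 := by
  rw [← sub_eq_zero, zMap_sub_self hα ht, div_eq_zero_iff, neg_eq_zero]
  simp [hα, ht]

lemma monotoneOn_zMap (hα : 0 < α) (hα1 : α ≤ 1) : MonotoneOn (zMap α x) (Ioi 0) := by
  intro s hs t _ hst
  unfold zMap
  gcongr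

lemma continuousOn_zMap : ContinuousOn (zMap α x) (Ioi 0) := by
  unfold zMap
  fun_prop (disch := intro t (ht : 0 < t); exact ht.ne')

end ZMap

/-- for 1/2 < α < 1 and x > 1 the sequence z₀ = x,
z_{k+1} = ((1−α)z_k − 1/z_k)/α + x + 1 converges to
z_∞(x) = (α(x+1) + √(α²(x+1)² − 4(2α−1)))/(4α − 2). -/
theorem stmt6 (α x : ℝ) (hα : 1/2 < α) (hα1 : α < 1) (hx : 1 < x)
    (z : ℕ → ℝ) (hz0 : z 0 = x)
    (hrec : ∀ k, z (k+1) = ((1-α) * z k - 1/(z k))/α + x + 1) :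
    Filter.Tendsto z Filter.atTop
      (nhds ((α*(x+1) + Real.sqrt (α^2*(x+1)^2 - 4*(2*α-1)))/(4*α-2))) := by
  have hα0 : 0 < α := by linarith
  have ha : 0 < 2 * α - 1 := by linarith
  have hqx : (2 * α - 1) * (x * x) + -(α * (x + 1)) * x + 1 < 0 := by
    nlinarith [mul_pos (sub_pos.2 hx) (sub_pos.2 hα1)]
  set L := (-(-(α * (x + 1))) + √(discrim (2 * α - 1) (-(α * (x + 1))) 1)) / (2 * (2 * α - 1))
  have hxL : x ≤ L := le_larger_root ha hqx.le
  have hpos : Icc x L ⊆ Ioi 0 := fun _ ht => (by linarith : (0 : ℝ) < x).trans_le ht.1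
  have hL : zMap α x L = L := by
    rw [zMap_eq_self_iff hα0.ne' (by linarith)]
    exact quadratic_larger_root_eq_zero ha.ne' (discrim_nonneg_of_quadratic_nonpos ha.le hqx.le)
  obtain ⟨c, hc, hfix, hlim⟩ := exists_isFixedPt_tendsto_of_monotoneOn_Icc hxL
    ((monotoneOn_zMap hα0 hα1.le).mono hpos) (continuousOn_zMap.mono hpos)
    (le_zMap hα0 (by linarith) hqx.le) hL.le hz0 hrec
  convert hlim using 2
  rw [eq_larger_root_of_quadratic_eq_zero ha hqx hc.1
    ((zMap_eq_self_iff hα0.ne' (by linarith [hc.1])).1 hfix), discrim]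
  congr 1 <;> ring_nf
end

section
/- Let 0 < α ≤ 1/2 and x > 1. The sequence z₀ = x, z_{k+1} = ((1−α)z_k − 1/z_k)/α + x + 1 has differences satisfying (z_{k+1} − z_k)/(z_k − z_{k−1}) = (1 − α + 1/(z_k z_{k−1}))/α ≥ (1−α)/α ≥ 1 whenever z_k, z_{k−1} ≥ 1, and consequently z_k → ∞ as k → ∞. -/
/-!
Subtracting consecutive instances of the recursion gives
`z (k+2) - z (k+1) = (z (k+1) - z k) * (1 - α + 1 / (z (k+1) * z k)) / α`,
and for `α ≤ 1/2` the factor is at least `(1 - α) / α ≥ 1` as long as the terms are positive.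
Starting from `z 0 = 1`, `z 1 = x`, the differences therefore never drop below `x - 1 > 0`,
so the sequence grows at least linearly.
-/

open Filter

lemma sub_succ_eq_mul_sub {α c : ℝ} {z : ℕ → ℝ} (hα : α ≠ 0)
    (hrec : ∀ k, z (k+1) = ((1-α)*z k - 1/z k)/α + c) {k : ℕ}
    (hk : z k ≠ 0) (hk1 : z (k+1) ≠ 0) :
    z (k+2) - z (k+1) = (z (k+1) - z k) * ((1 - α + 1/(z (k+1) * z k))/α) := by
  have hsub : z (k+2) - z (k+1) = ((1-α)*z (k+1) - 1/z (k+1))/α - ((1-α)*z k - 1/z k)/α := by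
    linarith [hrec k, hrec (k+1)]
  rw [hsub]
  field_simp
  ring

lemma one_le_one_sub_div_self {α : ℝ} (hα : 0 < α) (hα1 : α ≤ 1/2) : 1 ≤ (1-α)/α := by
  rw [le_div_iff₀ hα]
  linarith

lemma one_sub_div_self_le {α a : ℝ} (hα : 0 < α) (ha : 0 ≤ a) :
    (1-α)/α ≤ (1 - α + 1/a)/α := by
  gcongr
  exact le_add_of_nonneg_right (one_div_nonneg.mpr ha)

lemma one_le_and_le_sub_succ {α c d : ℝ} {z : ℕ → ℝ} (hα : 0 < α) (hα1 : α ≤ 1/2)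
    (hrec : ∀ k, z (k+1) = ((1-α)*z k - 1/z k)/α + c)
    (hz0 : 1 ≤ z 0) (hd : 0 ≤ d) (hz1 : d ≤ z 1 - z 0) :
    ∀ k, 1 ≤ z k ∧ d ≤ z (k+1) - z k := by
  intro k
  induction k with
  | zero => exact ⟨hz0, hz1⟩
  | succ k ih =>
    obtain ⟨hk, hdk⟩ := ih
    have hk1 : 1 ≤ z (k+1) := by linarith
    have hfactor : 1 ≤ (1 - α + 1/(z (k+1) * z k))/α :=
      (one_le_one_sub_div_self hα hα1).trans
        (one_sub_div_self_le hα (by positivity))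
    refine ⟨hk1, ?_⟩
    rw [sub_succ_eq_mul_sub hα.ne' hrec (by positivity) (by positivity)]
    exact hdk.trans (le_mul_of_one_le_right (hd.trans hdk) hfactor)

lemma tendsto_atTop_of_le_sub_succ {z : ℕ → ℝ} {d : ℝ} (hd : 0 < d)
    (h : ∀ k, d ≤ z (k+1) - z k) : Tendsto z atTop atTop := by
  have hlin : ∀ k : ℕ, z 0 + k * d ≤ z k := by
    intro k
    induction k with
    | zero => simp
    | succ k ih =>
      push_cast
      linarith [h k]
  refine tendsto_atTop_mono hlin (tendsto_atTop_add_const_left _ _ ?_)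
  exact tendsto_natCast_atTop_atTop.atTop_mul_const hd

/-- for 0 < α ≤ 1/2 and x > 1, the sequence with z₋₁ = 1
(encoded as z 0 = 1; then z 1 = x follows from the conservation-law recursion)
has ratio of successive differences (1 − α + 1/(z_k z_{k−1}))/α ≥ (1−α)/α ≥ 1
whenever z_k, z_{k−1} ≥ 1, and z_k → ∞. -/
theorem stmt8 (α x : ℝ) (hα : 0 < α) (hα1 : α ≤ 1/2) (hx : 1 < x)
    (z : ℕ → ℝ) (hz0 : z 0 = 1)
    (hrec : ∀ k, z (k+1) = ((1-α)*z k - 1/(z k))/α + x + 1) :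
    (∀ k, 1 ≤ z k → 1 ≤ z (k+1) →
      (z (k+2) - z (k+1)) / (z (k+1) - z k) = (1 - α + 1/(z (k+1) * z k))/α ∧
      (1-α)/α ≤ (1 - α + 1/(z (k+1) * z k))/α ∧
      1 ≤ (1-α)/α) ∧
    Filter.Tendsto z Filter.atTop Filter.atTop := by
  have hrec' : ∀ k, z (k+1) = ((1-α)*z k - 1/z k)/α + (x + 1) := fun k => by
    rw [hrec k, add_assoc]
  have hz1 : z 1 = x := by
    rw [hrec 0, hz0]
    field_simp
    ring
  have hdiff k : x - 1 ≤ z (k+1) - z k :=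
    (one_le_and_le_sub_succ hα hα1 hrec' hz0.ge (by linarith) (by rw [hz1, hz0])) k |>.2
  refine ⟨fun k hk hk1 => ⟨?_, one_sub_div_self_le hα (by positivity),
    one_le_one_sub_div_self hα hα1⟩, tendsto_atTop_of_le_sub_succ (by linarith) hdiff⟩
  have hpos : z (k+1) - z k ≠ 0 := by linarith [hdiff k]
  rw [sub_succ_eq_mul_sub hα.ne' hrec' (by positivity) (by positivity),
    mul_div_cancel_left₀ _ hpos]
end

section
/- For α = 1, the sequence defined by z₀ = x ≥ 1 and z_{k+1} = x + 1 − 1/z_k has the closed-form solution z_n(x) = [((x+2)√(x−1) + x√(x+3))(√(x+3)+√(x−1))^{2n} − ((x+2)√(x−1) − x√(x+3))(√(x+3)−√(x−1))^{2n}] / [(√(x−1)+√(x+3))^{2n+1} + (√(x+3)−√(x−1))^{2n+1}] for x > 1. -/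
/-!
Writing `z k = p (k + 1) / p k` linearises the Möbius recursion `z (k + 1) = c - 1 / z k` into
`p (k + 2) = c * p (k + 1) - p k`. The numbers `t = (√(x + 3) + √(x - 1)) / 2` and
`s = (√(x + 3) - √(x - 1)) / 2` satisfy `t * s = 1` and `t ^ 2 + s ^ 2 = x + 1`, so
`p k = t ^ (2 k + 1) + s ^ (2 k + 1)` is a positive solution with `p 1 / p 0 = x`; the stated
quotient is `p (n + 1) / p n` with numerator and denominator scaled by `2 ^ (2 n + 1)`.
-/

theorem eq_div_of_linear_recurrence {K : Type*} [Field K] {c : K} {p z : ℕ → K}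
    (hp : ∀ k, p (k + 2) = c * p (k + 1) - p k) (hp_ne : ∀ k, p (k + 1) ≠ 0)
    (hz0 : z 0 = p 1 / p 0) (hz : ∀ k, z (k + 1) = c - 1 / z k) (n : ℕ) :
    z n = p (n + 1) / p n := by
  induction n with
  | zero => exact hz0
  | succ n ih =>
    rw [hz, ih, one_div_div, hp, eq_div_iff (hp_ne n), sub_mul, div_mul_cancel₀ _ (hp_ne n)]

theorem eq_pow_add_pow_div_of_mul_eq_one {K : Type*} [Field K] [LinearOrder K]
    [IsStrictOrderedRing K] {t s : K} (ht : 0 < t) (hs : 0 < s) (hts : t * s = 1) {z : ℕ → K}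
    (hz0 : z 0 = t ^ 2 + s ^ 2 - 1) (hz : ∀ k, z (k + 1) = t ^ 2 + s ^ 2 - 1 / z k) (n : ℕ) :
    z n = (t ^ (2 * n + 3) + s ^ (2 * n + 3)) / (t ^ (2 * n + 1) + s ^ (2 * n + 1)) := by
  have hp_pos : ∀ k : ℕ, 0 < t ^ (2 * k + 1) + s ^ (2 * k + 1) := fun k ↦ by positivity
  refine eq_div_of_linear_recurrence (p := fun k ↦ t ^ (2 * k + 1) + s ^ (2 * k + 1))
    (fun k ↦ ?_) (fun k ↦ (hp_pos _).ne') ?_ hz n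
  · linear_combination (-(t ^ (2 * k + 1) + s ^ (2 * k + 1)) * (t * s + 1)) * hts
  · rw [hz0, eq_div_iff (hp_pos 0).ne']
    linear_combination (t + s) * hts

/-- for α = 1, the sequence z₀ = x, z_{k+1} = x + 1 − 1/z_k has the
stated closed-form solution for x > 1. -/
theorem stmt13 (x : ℝ) (hx : 1 < x)
    (z : ℕ → ℝ) (hz0 : z 0 = x) (hrec : ∀ k, z (k+1) = x + 1 - 1/(z k)) :
    ∀ n : ℕ, z n =
      (((x+2)*Real.sqrt (x-1) + x*Real.sqrt (x+3)) * (Real.sqrt (x+3) + Real.sqrt (x-1))^(2*n)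
        - ((x+2)*Real.sqrt (x-1) - x*Real.sqrt (x+3)) * (Real.sqrt (x+3) - Real.sqrt (x-1))^(2*n))
      / ((Real.sqrt (x-1) + Real.sqrt (x+3))^(2*n+1)
        + (Real.sqrt (x+3) - Real.sqrt (x-1))^(2*n+1)) := by
  obtain ⟨t, s, ha, hb, hs, hst⟩ : ∃ t s : ℝ,
      √(x + 3) = t + s ∧ √(x - 1) = t - s ∧ 0 < s ∧ 0 < t - s :=
    ⟨(√(x + 3) + √(x - 1)) / 2, (√(x + 3) - √(x - 1)) / 2, by ring, by ring,
      by linarith [Real.sqrt_lt_sqrt (by linarith : 0 ≤ x - 1) (by linarith : x - 1 < x + 3)],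
      by linarith [Real.sqrt_pos.2 (by linarith : 0 < x - 1)]⟩
  have ha2 : (t + s) ^ 2 = x + 3 := ha ▸ Real.sq_sqrt (by linarith)
  have hb2 : (t - s) ^ 2 = x - 1 := hb ▸ Real.sq_sqrt (by linarith)
  have hts : t * s = 1 := by linear_combination (ha2 - hb2) / 4
  obtain rfl : x = t ^ 2 + s ^ 2 - 1 := by linear_combination -(ha2 + hb2) / 2
  have hnum : (t ^ 2 + s ^ 2 - 1 + 2) * (t - s) + (t ^ 2 + s ^ 2 - 1) * (t + s) = 2 * t ^ 3 := by
    linear_combination 2 * s * hts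
  have hnum' : (t ^ 2 + s ^ 2 - 1 + 2) * (t - s) - (t ^ 2 + s ^ 2 - 1) * (t + s)
      = -(2 * s ^ 3) := by
    linear_combination -2 * t * hts
  intro n
  rw [eq_pow_add_pow_div_of_mul_eq_one (by linarith) hs hts hz0
    (fun k ↦ by rw [hrec]; ring) n, ha, hb, hnum, hnum']
  rw [show 2 * t ^ 3 * (t + s + (t - s)) ^ (2 * n) - -(2 * s ^ 3) * (t + s - (t - s)) ^ (2 * n)
      = 2 ^ (2 * n + 1) * (t ^ (2 * n + 3) + s ^ (2 * n + 3)) by ring,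
    show (t - s + (t + s)) ^ (2 * n + 1) + (t + s - (t - s)) ^ (2 * n + 1)
      = 2 ^ (2 * n + 1) * (t ^ (2 * n + 1) + s ^ (2 * n + 1)) by ring,
    mul_div_mul_left _ _ (by positivity)]
end

section
/- Let g, g₀, g₁ : (0,∞)² → [0,∞) with g = g₀ + g₁, suppose there exist γ ≥ 0 and α ∈ (0,1] such that e^{γ(x+y)} g(x,y) = e^{γ(1/x + 1/y)} g(1/x, 1/y) for all x,y > 0, and g₁(x,y) ≤ e^{−αγ(y−y')} g₁(x,y') for all 0 < y' ≤ y. Then for x < 1 < y with y > (1/x) and any y' ∈ (0,y] satisfying αy + x − 1/x + (1−α)y' − 1/y' = 0, one has g₁(x,y) ≤ g(1/x, 1/y'). -/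
/-- single-step estimate of the iteration. Under modular covariance of g and
the twist-suppression property of g₁, for x < 1 < y with y > 1/x and y' ∈ (0,y] solving
αy + x − 1/x + (1−α)y' − 1/y' = 0, one has g₁(x,y) ≤ g(1/x, 1/y'). -/
theorem stmt16 (α γ : ℝ) (hα : 0 < α) (hα1 : α ≤ 1) (hγ : 0 ≤ γ)
    (g g₀ g₁ : ℝ → ℝ → ℝ)
    (hg0 : ∀ x y : ℝ, 0 < x → 0 < y → 0 ≤ g₀ x y)
    (hg1 : ∀ x y : ℝ, 0 < x → 0 < y → 0 ≤ g₁ x y)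
    (hsplit : ∀ x y : ℝ, 0 < x → 0 < y → g x y = g₀ x y + g₁ x y)
    (hmod : ∀ x y : ℝ, 0 < x → 0 < y →
      Real.exp (γ*(x+y)) * g x y = Real.exp (γ*(1/x + 1/y)) * g (1/x) (1/y))
    (htwist : ∀ x y y' : ℝ, 0 < x → 0 < y' → y' ≤ y →
      g₁ x y ≤ Real.exp (-(α*γ*(y - y'))) * g₁ x y')
    (x y y' : ℝ) (hx0 : 0 < x) (hx1 : x < 1) (hy : 1 < y) (hxy : 1/x < y)
    (hy'0 : 0 < y') (hy'y : y' ≤ y)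
    (hκ : α*y + x - 1/x + (1-α)*y' - 1/y' = 0) :
    g₁ x y ≤ g (1/x) (1/y') := by
  have h1 : g₁ x y ≤ Real.exp (-(α*γ*(y - y'))) * g₁ x y' :=
    htwist x y y' hx0 hy'0 hy'y
  have h2 : g₁ x y' ≤ g x y' := by
    rw [hsplit x y' hx0 hy'0]; linarith [hg0 x y' hx0 hy'0]
  have h3 : g x y' = Real.exp (γ*(1/x + 1/y') - γ*(x+y')) * g (1/x) (1/y') := by
    have h := hmod x y' hx0 hy'0
    rw [Real.exp_sub, div_mul_eq_mul_div, ← h, mul_comm, mul_div_assoc,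
      div_self (Real.exp_ne_zero _), mul_one]
  calc g₁ x y ≤ Real.exp (-(α*γ*(y - y'))) * g₁ x y' := h1
    _ ≤ Real.exp (-(α*γ*(y - y'))) * g x y' := by
        exact mul_le_mul_of_nonneg_left h2 (Real.exp_pos _).le
    _ = Real.exp (-(α*γ*(y - y')) + (γ*(1/x + 1/y') - γ*(x+y'))) * g (1/x) (1/y') := by
        rw [h3, Real.exp_add]; ring
    _ = g (1/x) (1/y') := by
        have : -(α*γ*(y - y')) + (γ*(1/x + 1/y') - γ*(x+y'))
            = -γ * (α*y + x - 1/x + (1-α)*y' - 1/y') := by ring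
        rw [this, hκ, mul_zero, Real.exp_zero, one_mul]
end

section
/- For 1/2 < α < 1, the piecewise function f_∞(x) defined as 1/x for x ≥ 1/(2α−1) and as (1/2)(α(2−x)+√(α²(2−x)²+4(1−α))) for 1 ≤ x ≤ 1/(2α−1) is continuous on [1,∞), but its derivative is discontinuous at x* = 1/(2α−1): the left derivative at x* does not equal the right derivative −(2α−1)². -/
/-! Writing `t = 2α - 1`, the number `t = 1 / x*` is the positive root of the quadratic
`y² - α(2 - x*) y - (1 - α)` that defines the left branch at `x*`, so the two branches meet.
Differentiating the quadratic identity `f² - α(2 - x) f = 1 - α` along the left branch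
at `x*` gives `2t f' + α t - α(2 - x*) f' = 0`; substituting `f' = -t²` turns this into
`2t²(1 - α) = 0`, impossible for `α < 1`. -/

open Set

/-- The larger root of `y² - b y - k`. -/
noncomputable def posRoot (b k : ℝ) : ℝ := (b + √(b ^ 2 + 4 * k)) / 2

lemma posRoot_sq_sub {b k : ℝ} (hD : 0 ≤ b ^ 2 + 4 * k) :
    posRoot b k ^ 2 - b * posRoot b k - k = 0 := by
  have hsq := Real.sq_sqrt hD
  unfold posRoot
  linear_combination hsq / 4

lemma posRoot_eq_of_sq_sub {b k y : ℝ} (hk : 0 ≤ k) (hy : 0 < y)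
    (h : y ^ 2 - b * y - k = 0) : posRoot b k = y := by
  -- `2y - b = y + k / y > 0`, so it is the nonnegative square root of the discriminant.
  have hpos : 0 ≤ 2 * y - b := by nlinarith
  have hsqrt : √(b ^ 2 + 4 * k) = 2 * y - b := by
    rw [show b ^ 2 + 4 * k = (2 * y - b) ^ 2 by linear_combination -4 * h, Real.sqrt_sq hpos]
  rw [posRoot, hsqrt]
  ring

/-- The paper's `f_∞`: `1 / x` from `x* = 1 / (2α - 1)` on, the branch `f_α^{(2)}` before. -/
noncomputable def fInfty (α x : ℝ) : ℝ :=
  if 1 / (2 * α - 1) ≤ x then 1 / x else posRoot (α * (2 - x)) (1 - α)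

section

variable {α : ℝ}

lemma fInfty_eq_posRoot_of_le (hα : 1 / 2 < α) (hα1 : α < 1) {x : ℝ}
    (hx : x ≤ 1 / (2 * α - 1)) :
    fInfty α x = posRoot (α * (2 - x)) (1 - α) := by
  rcases hx.lt_or_eq with hlt | rfl
  · rw [fInfty, if_neg hlt.not_ge]
  · have ht : 2 * α - 1 ≠ 0 := by linarith
    rw [fInfty, if_pos le_rfl, one_div_one_div, eq_comm]
    refine posRoot_eq_of_sq_sub (by linarith) (by linarith) ?_
    field_simp
    ring

lemma fInfty_sq_sub_of_le (hα : 1 / 2 < α) (hα1 : α < 1) {x : ℝ}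
    (hx : x ≤ 1 / (2 * α - 1)) :
    fInfty α x ^ 2 - α * (2 - x) * fInfty α x - (1 - α) = 0 := by
  rw [fInfty_eq_posRoot_of_le hα hα1 hx]
  exact posRoot_sq_sub (by nlinarith [sq_nonneg (α * (2 - x))])

lemma continuousOn_fInfty (hα : 1 / 2 < α) (hα1 : α < 1) :
    ContinuousOn (fInfty α) (Ioi 0) := by
  refine ContinuousOn.if (fun x hx => ?_) ?_
    (Continuous.continuousOn (by unfold posRoot; fun_prop))
  · have hx : x ∈ frontier (Ici (1 / (2 * α - 1))) := hx.2
    rw [frontier_Ici, mem_singleton_iff] at hx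
    subst hx
    rw [← fInfty_eq_posRoot_of_le hα hα1 le_rfl, fInfty, if_pos le_rfl]
  · refine continuousOn_const.div continuousOn_id fun x hx => ?_
    exact (show (0 : ℝ) < x from hx.1).ne'

lemma hasDerivWithinAt_fInfty_Ici (hα : 1 / 2 < α) :
    HasDerivWithinAt (fInfty α) (-(2 * α - 1) ^ 2) (Ici (1 / (2 * α - 1)))
      (1 / (2 * α - 1)) := by
  have ht : 2 * α - 1 ≠ 0 := by linarith
  have hinv : HasDerivAt (fun x : ℝ => 1 / x) (-(2 * α - 1) ^ 2) (1 / (2 * α - 1)) := by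
    simpa only [one_div, inv_inv, inv_pow] using hasDerivAt_inv (inv_ne_zero ht)
  exact hinv.hasDerivWithinAt.congr (fun x hx => if_pos hx) (if_pos le_rfl)

lemma hasDerivWithinAt_fInfty_Iic_ne (hα : 1 / 2 < α) (hα1 : α < 1) {d : ℝ}
    (hd : HasDerivWithinAt (fInfty α) d (Iic (1 / (2 * α - 1))) (1 / (2 * α - 1))) :
    d ≠ -(2 * α - 1) ^ 2 := by
  set c := 1 / (2 * α - 1) with hc
  set F : ℝ → ℝ := fun x => fInfty α x ^ 2 - α * (2 - x) * fInfty α x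
  have hF : HasDerivWithinAt F (2 * fInfty α c * d + α * fInfty α c - α * (2 - c) * d)
      (Iic c) c := by
    have hlin : HasDerivWithinAt (fun x : ℝ => α * (2 - x)) (-α) (Iic c) c := by
      simpa using ((hasDerivWithinAt_id c (Iic c)).const_sub 2).const_mul α
    exact ((hd.fun_pow 2).fun_sub (hlin.fun_mul hd)).congr_deriv (by norm_num; ring)
  have hF0 : HasDerivWithinAt F 0 (Iic c) c :=
    (hasDerivWithinAt_const c _ (1 - α)).congr
      (fun x hx => by linear_combination fInfty_sq_sub_of_le hα hα1 hx)
      (by linear_combination fInfty_sq_sub_of_le hα hα1 le_rfl)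
  have himplicit := (uniqueDiffOn_Iic c c self_mem_Iic).eq_deriv _ hF hF0
  have hfc : fInfty α c = 2 * α - 1 := by rw [fInfty, if_pos le_rfl, hc, one_div_one_div]
  have ht : 2 * α - 1 ≠ 0 := by linarith
  rintro rfl
  rw [hfc, hc] at himplicit
  have hzero : 2 * (2 * α - 1) ^ 2 * (1 - α) = 0 := by
    rw [← himplicit]
    field_simp
    ring
  have h1α : 1 - α ≠ 0 := by linarith
  exact mul_ne_zero (mul_ne_zero two_ne_zero (pow_ne_zero 2 ht)) h1α hzero

end

/-- for 1/2 < α < 1, the piecewise f_∞ (equal to 1/x for x ≥ x* = 1/(2α−1)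
and to f_α^{(2)}(x) for 1 ≤ x ≤ x*) is continuous on [1,∞); its right derivative at x*
is −(2α−1)², but no left derivative at x* equals −(2α−1)². -/
theorem stmt18 (α : ℝ) (hα : 1/2 < α) (hα1 : α < 1) :
    ContinuousOn
      (fun x : ℝ => if 1/(2*α-1) ≤ x then 1/x
        else (α*(2-x) + Real.sqrt (α^2*(2-x)^2 + 4*(1-α)))/2) (Set.Ici 1) ∧
    HasDerivWithinAt
      (fun x : ℝ => if 1/(2*α-1) ≤ x then 1/x
        else (α*(2-x) + Real.sqrt (α^2*(2-x)^2 + 4*(1-α)))/2)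
      (-(2*α-1)^2) (Set.Ici (1/(2*α-1))) (1/(2*α-1)) ∧
    (∀ dL : ℝ, HasDerivWithinAt
      (fun x : ℝ => if 1/(2*α-1) ≤ x then 1/x
        else (α*(2-x) + Real.sqrt (α^2*(2-x)^2 + 4*(1-α)))/2)
      dL (Set.Iic (1/(2*α-1))) (1/(2*α-1)) → dL ≠ -(2*α-1)^2) := by
  have hf : (fun x : ℝ => if 1/(2*α-1) ≤ x then 1/x
      else (α*(2-x) + Real.sqrt (α^2*(2-x)^2 + 4*(1-α)))/2) = fInfty α := by
    funext x
    simp only [fInfty, posRoot, mul_pow]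
  rw [hf]
  exact ⟨(continuousOn_fInfty hα hα1).mono fun x (hx : 1 ≤ x) => zero_lt_one.trans_le hx,
    hasDerivWithinAt_fInfty_Ici hα, fun _ => hasDerivWithinAt_fInfty_Iic_ne hα hα1⟩
end
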